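/- arXiv:2505.17215 — 4 statements merged into one kernel-verified Lean document; each statement's English description precedes it below -/
import Mathlib

section
/- Let $h$ be a Hermitian matrix in block form $h = \begin{pmatrix} A & B \\ B^* & D \end{pmatrix}$ with $D$ Hermitian, and suppose $\ker D \subseteq \ker B$. Then for each $* \in \{+,-,0\}$, $n_*(h) = n_*(D) + n_*(A - B D^+ B^*)$, where $D^+$ is the Moore–Penrose pseudoinverse of $D$. -/
open Matrix

/-- Moore–Penrose pseudoinverse conditions. -/
def IsMoorePenrose {ι : Type*} [Fintype ι] (M Mp : Matrix ι ι ℂ) : Prop :=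
  Mp * M * Mp = Mp ∧ M * Mp * M = M ∧ (M * Mp).IsHermitian ∧ (Mp * M).IsHermitian

/-- Number of positive eigenvalues (with multiplicity) of a Hermitian matrix. -/
noncomputable def posCount {ι : Type*} [Fintype ι] [DecidableEq ι] {M : Matrix ι ι ℂ}
    (hM : M.IsHermitian) : ℕ := {i | 0 < hM.eigenvalues i}.ncard

/-- Number of negative eigenvalues (with multiplicity) of a Hermitian matrix. -/
noncomputable def negCount {ι : Type*} [Fintype ι] [DecidableEq ι] {M : Matrix ι ι ℂ}
    (hM : M.IsHermitian) : ℕ := {i | hM.eigenvalues i < 0}.ncard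

/-- Number of zero eigenvalues (with multiplicity) of a Hermitian matrix. -/
noncomputable def zeroCount {ι : Type*} [Fintype ι] [DecidableEq ι] {M : Matrix ι ι ℂ}
    (hM : M.IsHermitian) : ℕ := {i | hM.eigenvalues i = 0}.ncard

/-!
Since `ker D ⊆ ker B` and `D D⁺ D = D`, we have `B D⁺ D = B`, so the invertible matrix
`X = [[1, -B D⁺], [0, 1]]` satisfies `X h Xᴴ = diag(A - B D⁺ Bᴴ, D)`. The positive index of
inertia of `M` (the largest dimension of a subspace on which `x ↦ Re (xᴴ M x)` is positive
definite) is invariant under such congruences, is additive on block-diagonal Hermitian matrices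
(diagonalize each block), and equals the number of positive eigenvalues. Applied to `h` and `-h`
this gives `n₊` and `n₋`; `n₀` follows because `n₊ + n₋ + n₀` is the size of the matrix.
-/

open Module

lemma Set.ncard_setOf_sumElim {κ₁ κ₂ α : Type*} [Fintype κ₁] [Fintype κ₂] (p : α → Prop)
    (f : κ₁ → α) (g : κ₂ → α) :
    {i | p (Sum.elim f g i)}.ncard = {i | p (f i)}.ncard + {i | p (g i)}.ncard := by
  classical
  simp only [Set.ncard_eq_toFinset_card', Set.toFinset_ofPred, Finset.card_filter,
    Fintype.sum_sum_type, Sum.elim_inl, Sum.elim_inr]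
  rfl

namespace Matrix

variable {𝕜 ι : Type*} [RCLike 𝕜] [Fintype ι]

def reForm (M : Matrix ι ι 𝕜) (x : ι → 𝕜) : ℝ := RCLike.re (star x ⬝ᵥ M *ᵥ x)

def PosDefOn (M : Matrix ι ι 𝕜) (W : Submodule 𝕜 (ι → 𝕜)) : Prop :=
  ∀ x ∈ W, x ≠ 0 → 0 < reForm M x

def NegSemidefOn (M : Matrix ι ι 𝕜) (W : Submodule 𝕜 (ι → 𝕜)) : Prop :=
  ∀ x ∈ W, reForm M x ≤ 0

noncomputable def posIndex (M : Matrix ι ι 𝕜) : ℕ :=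
  sSup {k | ∃ W : Submodule 𝕜 (ι → 𝕜), PosDefOn M W ∧ finrank 𝕜 W = k}

lemma reForm_conj (P M : Matrix ι ι 𝕜) (x : ι → 𝕜) :
    reForm (P * M * Pᴴ) x = reForm M (Pᴴ *ᵥ x) := by
  rw [reForm, reForm, star_mulVec, conjTranspose_conjTranspose, ← mulVec_mulVec,
    ← mulVec_mulVec, dotProduct_mulVec, dotProduct_mulVec, vecMul_vecMul]

lemma reForm_diagonal [DecidableEq ι] (d : ι → ℝ) (x : ι → 𝕜) :
    reForm (diagonal (RCLike.ofReal ∘ d)) x = ∑ i, d i * ‖x i‖ ^ 2 := by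
  simp only [reForm, mulVec_diagonal, dotProduct, map_sum, Pi.star_apply, RCLike.star_def,
    Function.comp_apply]
  refine Finset.sum_congr rfl fun i _ => ?_
  rw [mul_left_comm, RCLike.conj_mul, ← RCLike.ofReal_pow, ← RCLike.ofReal_mul, RCLike.ofReal_re]

lemma finrank_add_finrank_le_of_posDefOn {M : Matrix ι ι 𝕜} {W V : Submodule 𝕜 (ι → 𝕜)}
    (hW : PosDefOn M W) (hV : NegSemidefOn M V) :
    finrank 𝕜 W + finrank 𝕜 V ≤ Fintype.card ι := by
  have hWV : Disjoint W V := by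
    rw [Submodule.disjoint_def]
    intro x hxW hxV
    by_contra hx
    exact (hW x hxW hx).not_ge (hV x hxV)
  simpa using Submodule.finrank_add_finrank_le_of_disjoint hWV

lemma bddAbove_finrank_posDefOn (M : Matrix ι ι 𝕜) :
    BddAbove {k | ∃ W : Submodule 𝕜 (ι → 𝕜), PosDefOn M W ∧ finrank 𝕜 W = k} := by
  refine ⟨Fintype.card ι, ?_⟩
  rintro _ ⟨W, -, rfl⟩
  simpa using Submodule.finrank_le W

lemma finrank_le_posIndex {M : Matrix ι ι 𝕜} {W : Submodule 𝕜 (ι → 𝕜)} (hW : PosDefOn M W) :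
    finrank 𝕜 W ≤ posIndex M :=
  le_csSup (bddAbove_finrank_posDefOn M) ⟨W, hW, rfl⟩

lemma exists_posDefOn_finrank_eq_posIndex (M : Matrix ι ι 𝕜) :
    ∃ W : Submodule 𝕜 (ι → 𝕜), PosDefOn M W ∧ finrank 𝕜 W = posIndex M := by
  refine Nat.sSup_mem (Set.nonempty_of_mem (x := 0) ?_) (bddAbove_finrank_posDefOn M)
  exact ⟨⊥, fun _ hx hx0 => absurd ((Submodule.mem_bot 𝕜).mp hx) hx0, finrank_bot 𝕜 _⟩

lemma posIndex_add_finrank_le {M : Matrix ι ι 𝕜} {V : Submodule 𝕜 (ι → 𝕜)}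
    (hV : NegSemidefOn M V) : posIndex M + finrank 𝕜 V ≤ Fintype.card ι := by
  obtain ⟨W, hW, hWM⟩ := exists_posDefOn_finrank_eq_posIndex M
  exact hWM ▸ finrank_add_finrank_le_of_posDefOn hW hV

lemma posIndex_le_posIndex_conj [DecidableEq ι] {P Q : Matrix ι ι 𝕜} (hQP : Q * P = 1)
    (M : Matrix ι ι 𝕜) :
    posIndex M ≤ posIndex (P * M * Pᴴ) := by
  obtain ⟨W, hW, hWM⟩ := exists_posDefOn_finrank_eq_posIndex M
  have hPQ : Pᴴ * Qᴴ = 1 := by rw [← conjTranspose_mul, hQP, conjTranspose_one]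
  have hinj : Function.Injective (mulVecLin Qᴴ) := fun x y hxy => by
    simpa [mulVec_mulVec, hPQ] using congrArg (Pᴴ *ᵥ ·) hxy
  rw [← hWM, (Submodule.equivMapOfInjective _ hinj W).finrank_eq]
  refine finrank_le_posIndex ?_
  rintro _ ⟨x, hx, rfl⟩ hx0
  rw [reForm_conj, mulVecLin_apply, mulVec_mulVec, hPQ, one_mulVec]
  exact hW x hx fun h => hx0 (by simp [h])

lemma posIndex_conj [DecidableEq ι] {P : Matrix ι ι 𝕜} (hP : IsUnit P) (M : Matrix ι ι 𝕜) :
    posIndex (P * M * Pᴴ) = posIndex M := by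
  have hP' := (isUnit_iff_isUnit_det P).mp hP
  refine le_antisymm ?_ (posIndex_le_posIndex_conj (nonsing_inv_mul P hP') M)
  calc posIndex (P * M * Pᴴ) ≤ posIndex (P⁻¹ * (P * M * Pᴴ) * P⁻¹ᴴ) :=
        posIndex_le_posIndex_conj (mul_nonsing_inv P hP') _
    _ = posIndex M := by
        rw [← Matrix.mul_assoc, ← Matrix.mul_assoc, nonsing_inv_mul P hP', Matrix.one_mul,
          Matrix.mul_assoc, ← conjTranspose_mul, nonsing_inv_mul P hP', conjTranspose_one,
          Matrix.mul_one]

lemma posIndex_diagonal [DecidableEq ι] (d : ι → ℝ) :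
    posIndex (diagonal (RCLike.ofReal ∘ d : ι → 𝕜)) = {i | 0 < d i}.ncard := by
  set s := {i | 0 < d i}
  have hpos : PosDefOn (diagonal (RCLike.ofReal ∘ d)) (Pi.spanSubset 𝕜 s) := by
    intro x hx hx0
    obtain ⟨j, hj⟩ := Function.ne_iff.mp hx0
    have hjs : j ∈ s := by_contra fun h => hj (Pi.mem_spanSubset_iff.mp hx j h)
    rw [reForm_diagonal]
    refine Finset.sum_pos' (fun i _ => ?_)
      ⟨j, Finset.mem_univ j, mul_pos hjs (pow_pos (norm_pos_iff.mpr hj) 2)⟩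
    by_cases hi : i ∈ s
    · exact mul_nonneg (le_of_lt hi) (by positivity)
    · simp [Pi.mem_spanSubset_iff.mp hx i hi]
  have hneg : NegSemidefOn (diagonal (RCLike.ofReal ∘ d)) (Pi.spanSubset 𝕜 sᶜ) := by
    intro x hx
    rw [reForm_diagonal]
    refine Finset.sum_nonpos fun i _ => ?_
    by_cases hi : i ∈ s
    · simp [Pi.mem_spanSubset_iff.mp hx i (not_not_intro hi)]
    · exact mul_nonpos_of_nonpos_of_nonneg (not_lt.mp hi) (by positivity)
  have hle := finrank_le_posIndex hpos
  have hge := posIndex_add_finrank_le hneg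
  rw [Pi.dim_spanSubset] at hle hge
  have := Set.ncard_add_ncard_compl s
  rw [Nat.card_eq_fintype_card] at this
  omega

lemma IsHermitian.eq_conj_diagonal [DecidableEq ι] {M : Matrix ι ι 𝕜} (hM : M.IsHermitian) :
    M = (hM.eigenvectorUnitary : Matrix ι ι 𝕜) * diagonal (RCLike.ofReal ∘ hM.eigenvalues) *
      (hM.eigenvectorUnitary : Matrix ι ι 𝕜)ᴴ := by
  conv_lhs => rw [hM.spectral_theorem, Unitary.conjStarAlgAut_apply]
  rfl

lemma IsHermitian.posIndex_eq [DecidableEq ι] {M : Matrix ι ι 𝕜} (hM : M.IsHermitian) :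
    posIndex M = {i | 0 < hM.eigenvalues i}.ncard := by
  conv_lhs => rw [hM.eq_conj_diagonal]
  rw [posIndex_conj Unitary.isUnit_coe, posIndex_diagonal]

lemma IsHermitian.posIndex_neg_eq [DecidableEq ι] {M : Matrix ι ι 𝕜} (hM : M.IsHermitian) :
    posIndex (-M) = {i | hM.eigenvalues i < 0}.ncard := by
  have hdiag : -diagonal (RCLike.ofReal ∘ hM.eigenvalues) =
      diagonal (RCLike.ofReal ∘ (-hM.eigenvalues) : ι → 𝕜) := by
    rw [diagonal_neg]; congr 1; ext i; simp
  conv_lhs => rw [hM.eq_conj_diagonal, ← Matrix.neg_mul, ← Matrix.mul_neg, hdiag]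
  rw [posIndex_conj Unitary.isUnit_coe, posIndex_diagonal]
  simp only [Pi.neg_apply, neg_pos]

lemma posIndex_fromBlocks_zero {κ₁ κ₂ : Type*} [Fintype κ₁] [Fintype κ₂] [DecidableEq κ₁]
    [DecidableEq κ₂] {S : Matrix κ₁ κ₁ 𝕜} {D : Matrix κ₂ κ₂ 𝕜} (hS : S.IsHermitian)
    (hD : D.IsHermitian) : posIndex (fromBlocks S 0 0 D) = posIndex S + posIndex D := by
  set U₁ : Matrix κ₁ κ₁ 𝕜 := ↑hS.eigenvectorUnitary
  set U₂ : Matrix κ₂ κ₂ 𝕜 := ↑hD.eigenvectorUnitary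
  have hU : IsUnit (fromBlocks U₁ 0 0 U₂) := by
    rw [isUnit_iff_isUnit_det, det_fromBlocks_zero₂₁]
    exact (UnitaryGroup.det_isUnit _).mul (UnitaryGroup.det_isUnit _)
  have hconj : fromBlocks S 0 0 D = fromBlocks U₁ 0 0 U₂ *
      diagonal (RCLike.ofReal ∘ Sum.elim hS.eigenvalues hD.eigenvalues) *
        (fromBlocks U₁ 0 0 U₂)ᴴ := by
    conv_lhs => rw [hS.eq_conj_diagonal, hD.eq_conj_diagonal]
    rw [Sum.comp_elim, ← fromBlocks_diagonal, fromBlocks_conjTranspose, fromBlocks_multiply,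
      fromBlocks_multiply]
    simp [U₁, U₂]
  rw [hconj, posIndex_conj hU, posIndex_diagonal, hS.posIndex_eq, hD.posIndex_eq,
    Set.ncard_setOf_sumElim]

lemma mul_mul_eq_self_of_ker_le {l m α : Type*} [Fintype m] [Ring α]
    {B : Matrix l m α} {D Dp : Matrix m m α} (hD : D * Dp * D = D)
    (hker : ∀ v : m → α, D *ᵥ v = 0 → B *ᵥ v = 0) : B * Dp * D = B := by
  refine ext_iff_mulVec.mpr fun v => ?_
  have hv : D *ᵥ (v - Dp *ᵥ D *ᵥ v) = 0 := by
    rw [mulVec_sub, mulVec_mulVec, mulVec_mulVec, hD, sub_self]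
  have hB := hker _ hv
  rw [mulVec_sub, sub_eq_zero] at hB
  rw [← mulVec_mulVec, ← mulVec_mulVec, ← hB]

lemma fromBlocks_conj_schur {l m α : Type*} [Fintype l] [Fintype m] [DecidableEq l]
    [DecidableEq m] [Ring α] [StarRing α] {A : Matrix l l α} {B : Matrix l m α}
    {D Dp : Matrix m m α} (hD : D.IsHermitian) (hB : B * Dp * D = B) :
    fromBlocks 1 (-(B * Dp)) 0 1 * fromBlocks A B Bᴴ D * (fromBlocks 1 (-(B * Dp)) 0 1)ᴴ =
      fromBlocks (A - B * Dp * Bᴴ) 0 0 D := by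
  have hBH : D * (Dpᴴ * Bᴴ) = Bᴴ := by
    simpa [conjTranspose_mul, hD.eq, Matrix.mul_assoc] using congrArg conjTranspose hB
  simp [fromBlocks_conjTranspose, fromBlocks_multiply, Matrix.mul_assoc, hB, hBH, sub_eq_add_neg]

end Matrix

lemma posCount_eq_posIndex {ι : Type*} [Fintype ι] [DecidableEq ι] {M : Matrix ι ι ℂ}
    (hM : M.IsHermitian) : posCount hM = posIndex M :=
  hM.posIndex_eq.symm

lemma negCount_eq_posIndex_neg {ι : Type*} [Fintype ι] [DecidableEq ι] {M : Matrix ι ι ℂ}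
    (hM : M.IsHermitian) : negCount hM = posIndex (-M) :=
  hM.posIndex_neg_eq.symm

lemma posCount_add_negCount_add_zeroCount {ι : Type*} [Fintype ι] [DecidableEq ι]
    {M : Matrix ι ι ℂ} (hM : M.IsHermitian) :
    posCount hM + negCount hM + zeroCount hM = Fintype.card ι := by
  classical
  simp only [posCount, negCount, zeroCount, Set.ncard_eq_toFinset_card', Set.toFinset_ofPred,
    Finset.card_filter, ← Finset.sum_add_distrib]
  rw [Fintype.card_eq_sum_ones]
  refine Finset.sum_congr rfl fun i _ => ?_
  rcases lt_trichotomy (hM.eigenvalues i) 0 with h | h | h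
  · simp [h, h.not_gt, h.ne]
  · simp [h]
  · simp [h, h.not_gt, h.ne']

theorem haynsworth_inertia_general {m n : ℕ}
    (A : Matrix (Fin m) (Fin m) ℂ) (B : Matrix (Fin m) (Fin n) ℂ)
    (D Dp : Matrix (Fin n) (Fin n) ℂ)
    (hD : D.IsHermitian)
    (hDp : IsMoorePenrose D Dp)
    (hker : ∀ v : Fin n → ℂ, D.mulVec v = 0 → B.mulVec v = 0)
    (hh : (Matrix.fromBlocks A B Bᴴ D).IsHermitian)
    (hS : (A - B * Dp * Bᴴ).IsHermitian) :
    posCount hh = posCount hD + posCount hS ∧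
    negCount hh = negCount hD + negCount hS ∧
    zeroCount hh = zeroCount hD + zeroCount hS := by
  have hB : B * Dp * D = B := mul_mul_eq_self_of_ker_le hDp.2.1 hker
  have hX : IsUnit (fromBlocks 1 (-(B * Dp)) 0 1 : Matrix (Fin m ⊕ Fin n) (Fin m ⊕ Fin n) ℂ) := by
    simp [isUnit_iff_isUnit_det]
  have hconj := fromBlocks_conj_schur (A := A) hD hB
  have hpos : posCount hh = posCount hD + posCount hS := by
    rw [posCount_eq_posIndex, posCount_eq_posIndex, posCount_eq_posIndex, ← posIndex_conj hX,
      hconj, posIndex_fromBlocks_zero hS hD, add_comm]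
  have hneg : negCount hh = negCount hD + negCount hS := by
    rw [negCount_eq_posIndex_neg, negCount_eq_posIndex_neg, negCount_eq_posIndex_neg,
      ← posIndex_conj hX, Matrix.mul_neg, Matrix.neg_mul, hconj, fromBlocks_neg, neg_zero, neg_zero,
      posIndex_fromBlocks_zero hS.neg hD.neg, add_comm]
  have hh_card := posCount_add_negCount_add_zeroCount hh
  have hD_card := posCount_add_negCount_add_zeroCount hD
  have hS_card := posCount_add_negCount_add_zeroCount hS
  simp only [Fintype.card_sum, Fintype.card_fin] at hh_card hD_card hS_card
  exact ⟨hpos, hneg, by omega⟩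

/-- Haynsworth inertia additivity for the block matrix `h = [[A, B], [Bᴴ, D]]` with
possibly singular `D`, under the assumption `ker D ⊆ ker B`:
`n₊(h) = n₊(D) + n₊(A - B D⁺ Bᴴ)` and similarly for `n₋` and `n₀`. -/
theorem haynsworth_inertia {m n : ℕ}
    (A : Matrix (Fin m) (Fin m) ℂ) (B : Matrix (Fin m) (Fin n) ℂ)
    (D Dp : Matrix (Fin n) (Fin n) ℂ)
    (hA : A.IsHermitian) (hD : D.IsHermitian)
    (hDp : IsMoorePenrose D Dp)
    (hker : ∀ v : Fin n → ℂ, D.mulVec v = 0 → B.mulVec v = 0)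
    (hh : (Matrix.fromBlocks A B Bᴴ D).IsHermitian)
    (hS : (A - B * Dp * Bᴴ).IsHermitian) :
    posCount hh = posCount hD + posCount hS ∧
    negCount hh = negCount hD + negCount hS ∧
    zeroCount hh = zeroCount hD + zeroCount hS :=
  haynsworth_inertia_general A B D Dp hD hDp hker hh hS
end

section
/- Suppose $b = (b_1, \dots, b_d)$ with $b_j > 0$ satisfies the genericity condition: $\sum_{j=1}^d \epsilon_j b_j \neq 0$ for every choice of signs $\epsilon_j \in \{+1,-1\}$. Let $f: \mathbb{R}^{d-1} \to \mathbb{C}$, $f(\theta) = \sum_{j=1}^{d-1} b_j e^{i\theta_j} - b_d$. Then at every point $\theta$ with $f(\theta) = 0$, the real differential $df_\theta: \mathbb{R}^{d-1} \to \mathbb{C} \cong \mathbb{R}^2$ is surjective. -/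
/-!
The differential is, up to the factor `i`, the real linear combination map of the edge vectors
`cⱼ = bⱼ e^{iθⱼ}`, so it suffices that these span `ℂ` over `ℝ`. At a zero of `f` their sum is
`b_d ≠ 0`, so the span contains `1`; it is then all of `ℂ` as soon as some `cⱼ` is not real. If every
`cⱼ` were real, every `e^{iθⱼ}` would be `±1` and the real part of `f(θ) = 0` would be a vanishing
signed sum of the `bⱼ`, contradicting genericity.
-/

open Complex

theorem Complex.submodule_eq_top_of_one_mem_of_im_ne_zero {S : Submodule ℝ ℂ} (h1 : (1 : ℂ) ∈ S)
    {z : ℂ} (hz : z ∈ S) (him : z.im ≠ 0) : S = ⊤ := by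
  refine Submodule.eq_top_iff'.2 fun w => ?_
  have hw : w = (w.im / z.im) • z + (w.re - w.im / z.im * z.re) • (1 : ℂ) := by
    apply Complex.ext <;> simp only [add_re, add_im, real_smul, re_ofReal_mul, im_ofReal_mul,
      one_re, one_im] <;> field_simp <;> ring
  rw [hw]
  exact S.add_mem (S.smul_mem _ hz) (S.smul_mem _ h1)

theorem Complex.surjective_sum_mul_ofReal {ι : Type*} [Fintype ι] {c : ι → ℂ}
    (hc : Submodule.span ℝ (Set.range c) = ⊤) :
    Function.Surjective fun v : ι → ℝ => ∑ j, c j * v j := by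
  have hfun : (fun v : ι → ℝ => ∑ j, c j * v j) = Fintype.linearCombination ℝ c := by
    ext v
    simp only [Fintype.linearCombination_apply, real_smul, mul_comm]
  rw [hfun]
  exact LinearMap.range_eq_top.1 ((Fintype.range_linearCombination ℝ c).trans hc)

theorem exists_signed_sum_eq_zero_of_sin_eq_zero {d : ℕ} (b : Fin (d + 1) → ℝ) (θ : Fin d → ℝ)
    (hsin : ∀ j, Real.sin (θ j) = 0)
    (hθ : ∑ j, b j.castSucc * Real.cos (θ j) = b (Fin.last d)) :
    ∃ ε : Fin (d + 1) → ℝ, (∀ j, ε j = 1 ∨ ε j = -1) ∧ ∑ j, ε j * b j = 0 := by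
  refine ⟨Fin.lastCases (-1) fun j => Real.cos (θ j), fun j => ?_, ?_⟩
  · induction j using Fin.lastCases with
    | last => simp
    | cast j => simpa using Real.sin_eq_zero_iff_cos_eq.1 (hsin j)
  · simp only [Fin.sum_univ_castSucc, Fin.lastCases_castSucc, Fin.lastCases_last]
    linarith [show ∑ j, Real.cos (θ j) * b j.castSucc = ∑ j, b j.castSucc * Real.cos (θ j) from
      Finset.sum_congr rfl fun j _ => mul_comm _ _]

/-- If `b` is generic (no signed combination of the lengths vanishes), then at every zero of
the linkage map `f(θ) = ∑_{j<d} bⱼ e^{iθⱼ} - b_d`, the real differential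
`v ↦ i ∑_{j<d} bⱼ e^{iθⱼ} vⱼ : ℝ^{d} → ℂ` is surjective.
(Here the lengths are indexed by `Fin (d+1)` and the angles by `Fin d`.) -/
theorem linkage_differential_surjective {d : ℕ} (b : Fin (d + 1) → ℝ)
    (hb : ∀ j, 0 < b j)
    (hgen : ∀ ε : Fin (d + 1) → ℝ, (∀ j, ε j = 1 ∨ ε j = -1) → ∑ j, ε j * b j ≠ 0)
    (θ : Fin d → ℝ)
    (hθ : (∑ j, (b j.castSucc : ℂ) * Complex.exp (Complex.I * (θ j : ℂ)))
        - (b (Fin.last d) : ℂ) = 0) :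
    Function.Surjective (fun v : Fin d → ℝ =>
      Complex.I * ∑ j, (b j.castSucc : ℂ) * Complex.exp (Complex.I * (θ j : ℂ)) * (v j : ℂ)) := by
  set c : Fin d → ℂ := fun j => b j.castSucc * exp (I * θ j)
  have hre : ∀ j, (c j).re = b j.castSucc * Real.cos (θ j) := fun j => by
    simp only [c, re_ofReal_mul, mul_comm I, exp_ofReal_mul_I_re]
  have him : ∀ j, (c j).im = b j.castSucc * Real.sin (θ j) := fun j => by
    simp only [c, im_ofReal_mul, mul_comm I, exp_ofReal_mul_I_im]
  have hsum : ∑ j, c j = b (Fin.last d) := sub_eq_zero.1 hθ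
  have hone : (1 : ℂ) ∈ Submodule.span ℝ (Set.range c) := by
    have hlast : (b (Fin.last d) : ℂ) ∈ Submodule.span ℝ (Set.range c) :=
      hsum ▸ Submodule.sum_mem _ fun j _ => Submodule.subset_span ⟨j, rfl⟩
    simpa [real_smul, (hb _).ne'] using Submodule.smul_mem _ (b (Fin.last d))⁻¹ hlast
  obtain ⟨k, hk⟩ : ∃ k, Real.sin (θ k) ≠ 0 := by
    by_contra! hsin
    have hreal : ∑ j, b j.castSucc * Real.cos (θ j) = b (Fin.last d) := by
      simpa only [re_sum, hre, ofReal_re] using congrArg re hsum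
    obtain ⟨ε, hε, hzero⟩ := exists_signed_sum_eq_zero_of_sin_eq_zero b θ hsin hreal
    exact hgen ε hε hzero
  have hspan := Complex.submodule_eq_top_of_one_mem_of_im_ne_zero hone
    (Submodule.subset_span ⟨k, rfl⟩) (by rw [him]; exact mul_ne_zero (hb _).ne' hk)
  exact (mul_left_surjective₀ I_ne_zero).comp (Complex.surjective_sum_mul_ofReal hspan)
end

section
/- Let $G = (V, E)$ be a finite simple connected graph, $V_N \subseteq V$ an admissible support, and let $V_{ZZ}$ (the residual vertices) and $E_{ZZ}$ (edges with both endpoints outside $V_N$) be defined as in the context. Then $|E_{ZZ}| \geq |V_{ZZ}|$. -/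
/-!
Fix a vertex `s₀ ∈ V_N` and send every residual vertex `r` to the edge joining it to a neighbour
one step closer to `s₀` (its parent in a breadth-first search tree rooted at `s₀`). That neighbour
lies outside `V_N` because `r` has no neighbour in `V_N`, so the edge is in `E_ZZ`; and two
vertices sent to the same edge would each be strictly closer to `s₀` than the other.
-/

/-- `VN` is an admissible support in `G`: the induced subgraph on `VN` is connected, and every
vertex outside `VN` has either no neighbors in `VN` or at least three neighbors in `VN`. -/
def AdmissibleSupport {V : Type*} (G : SimpleGraph V) (VN : Set V) : Prop :=
  (G.induce VN).Connected ∧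
    ∀ r ∉ VN, (∀ s ∈ VN, ¬ G.Adj r s) ∨ 3 ≤ {s | s ∈ VN ∧ G.Adj r s}.ncard

namespace SimpleGraph

variable {V : Type*} {G : SimpleGraph V} {u v : V}

lemma Reachable.exists_adj_dist_add_one_eq (h : G.Reachable u v) (huv : u ≠ v) :
    ∃ w, G.Adj u w ∧ G.dist w v + 1 = G.dist u v := by
  obtain ⟨p, hp⟩ := h.exists_walk_length_eq_dist
  cases p with
  | nil => exact absurd rfl huv
  | @cons _ w _ hadj q =>
    refine ⟨w, hadj, le_antisymm ?_ ?_⟩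
    · simpa [← hp] using dist_le q
    · calc G.dist u v ≤ G.dist u w + G.dist w v := hadj.reachable.dist_triangle_left v
        _ = G.dist w v + 1 := by rw [dist_eq_one_iff_adj.mpr hadj, add_comm]

lemma injOn_mk_of_dist_add_one_eq {S : Set V} {f : V → V}
    (hf : ∀ u ∈ S, G.dist (f u) v + 1 = G.dist u v) :
    S.InjOn fun u ↦ s(u, f u) := by
  intro u₁ h₁ u₂ h₂ he
  rcases Sym2.eq_iff.mp he with ⟨rfl, -⟩ | ⟨rfl, hf₁⟩
  · rfl
  · have := hf _ h₁
    have := hf _ h₂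
    grind

end SimpleGraph

/-- For an admissible support `VN` in a finite simple connected graph, the number of edges with
both endpoints outside `VN` is at least the number of residual vertices (vertices outside `VN`
with no neighbor in `VN`). -/
theorem card_VZZ_le_card_EZZ {V : Type*} [Fintype V] (G : SimpleGraph V)
    (hconn : G.Connected) (VN : Set V) (hadm : AdmissibleSupport G VN) :
    {r | r ∉ VN ∧ ∀ s ∈ VN, ¬ G.Adj r s}.ncard
      ≤ {e | e ∈ G.edgeSet ∧ ∀ v ∈ e, v ∉ VN}.ncard := by
  obtain ⟨⟨s₀, hs₀⟩⟩ := hadm.1.nonempty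
  have hne : ∀ r ∈ {r | r ∉ VN ∧ ∀ s ∈ VN, ¬ G.Adj r s}, r ≠ s₀ :=
    fun r hr h ↦ hr.1 (h ▸ hs₀)
  choose! f hadj hdist using
    fun r hr ↦ (hconn r s₀).exists_adj_dist_add_one_eq (hne r hr)
  refine Set.ncard_le_ncard_of_injOn _ ?_ (SimpleGraph.injOn_mk_of_dist_add_one_eq hdist)
  intro r hr
  refine ⟨hadj r hr, fun v hv ↦ ?_⟩
  rcases Sym2.mem_iff.mp hv with rfl | rfl
  · exact hr.1
  · exact fun hvN ↦ hr.2 _ hvN (hadj r hr)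
end

section
/- Let $h$ be an $n \times n$ real symmetric matrix strictly supported on a connected graph $G$ (i.e., $h_{rs} \neq 0$ iff $(rs) \in E$ for $r \neq s$), and suppose every eigenvector of $h$ is nowhere vanishing. If $G$ is a tree and $\lambda_k$ is the $k$-th smallest eigenvalue of $h$ (all eigenvalues simple) with eigenvector $\psi$, then the nodal count $\nu(h,k) = |\{(rs) \in E : \psi_r h_{rs}\psi_s > 0\}|$ equals $k - 1$. -/
/-!
Sylvester's law of inertia, applied to the quadratic form `q x = x ⬝ᵥ (h - λ) x` written in two
coordinate systems. In an orthonormal eigenbasis of `h`, `q = ∑ᵢ (λᵢ - λ) zᵢ²`, whose negative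
index is the number of eigenvalues below `λ`. Substituting `x = ψ y` (ground-state transform)
gives `q = -∑_{(rs) ∈ E} ψ_r h_rs ψ_s (y_r - y_s)²`. On a tree the `n - 1` edge differences
`y_r - y_s` are independent coordinates, since only constants have vanishing differences, so the
negative index is also the number of edges with `ψ_r h_rs ψ_s > 0`.
-/

open Matrix Finset Module

section Inertia

variable {E ι κ : Type*} [AddCommGroup E] [Module ℝ E] [Fintype ι] [Fintype κ]

theorem finrank_le_card_neg_of_sum_sq_neg (c : ι → ℝ) (T : E →ₗ[ℝ] ι → ℝ)
    {S : Submodule ℝ E} (hS : ∀ x ∈ S, x ≠ 0 → ∑ i, c i * T x i ^ 2 < 0) :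
    finrank ℝ S ≤ #{i | c i < 0} := by
  let π : S →ₗ[ℝ] {i // c i < 0} → ℝ := LinearMap.funLeft ℝ ℝ Subtype.val ∘ₗ T ∘ₗ S.subtype
  have hπ : Function.Injective π := by
    rw [← LinearMap.ker_eq_bot, LinearMap.ker_eq_bot']
    intro x hx
    by_contra hx0
    refine (hS x x.2 (by simpa using hx0)).not_ge (sum_nonneg fun i _ => ?_)
    by_cases hi : c i < 0
    · simp [show T x i = 0 from congrFun hx ⟨i, hi⟩]
    · exact mul_nonneg (not_lt.1 hi) (sq_nonneg _)
  simpa [Fintype.card_subtype] using LinearMap.finrank_le_finrank_of_injective hπ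

theorem exists_submodule_finrank_eq_card_neg (c : ι → ℝ) {T : E →ₗ[ℝ] ι → ℝ}
    (hT : Function.Surjective T) :
    ∃ S : Submodule ℝ E, finrank ℝ S = #{i | c i < 0} ∧
      ∀ x ∈ S, x ≠ 0 → ∑ i, c i * T x i ^ 2 < 0 := by
  obtain ⟨R, hR⟩ := T.exists_rightInverse_of_surjective (LinearMap.range_eq_top.2 hT)
  have hTR : ∀ y, T (R y) = y := LinearMap.congr_fun hR
  have hval : Function.Injective (Subtype.val : {i // c i < 0} → ι) := Subtype.val_injective
  let ext := Function.ExtendByZero.linearMap ℝ (Subtype.val : {i // c i < 0} → ι)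
  have hinj : Function.Injective (R ∘ₗ ext) := fun z z' h => by
    funext j
    simpa [hTR, ext, hval.extend_apply] using congrFun (congrArg T h) j
  refine ⟨LinearMap.range (R ∘ₗ ext), ?_, ?_⟩
  · rw [LinearMap.finrank_range_of_inj hinj, finrank_pi, Fintype.card_subtype]
  · rintro _ ⟨z, rfl⟩ hz
    obtain ⟨j, hj⟩ : ∃ j, z j ≠ 0 := by
      by_contra! h
      exact hz (by simp [show z = 0 from funext h])
    simp only [LinearMap.comp_apply, hTR]
    refine sum_neg' (fun i _ => ?_) ⟨j, mem_univ _, ?_⟩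
    · by_cases hi : c i < 0
      · exact mul_nonpos_of_nonpos_of_nonneg hi.le (sq_nonneg _)
      · have hnot : ¬∃ k : {i // c i < 0}, k.1 = i := fun ⟨k, hk⟩ => hi (hk ▸ k.2)
        simp [ext, Function.extend_apply' _ _ _ hnot]
    · simpa [ext, hval.extend_apply] using mul_neg_of_neg_of_pos j.2 (by positivity)

/-- Sylvester's law of inertia, for the negative index. -/
theorem card_neg_eq_of_sum_sq_eq (c : ι → ℝ) (d : κ → ℝ) {T : E →ₗ[ℝ] ι → ℝ}
    {T' : E →ₗ[ℝ] κ → ℝ} (hT : Function.Surjective T) (hT' : Function.Surjective T')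
    (h : ∀ x, ∑ i, c i * T x i ^ 2 = ∑ j, d j * T' x j ^ 2) :
    #{i | c i < 0} = #{j | d j < 0} := by
  obtain ⟨S, hS, hSneg⟩ := exists_submodule_finrank_eq_card_neg c hT
  obtain ⟨S', hS', hS'neg⟩ := exists_submodule_finrank_eq_card_neg d hT'
  apply le_antisymm
  · exact hS ▸ finrank_le_card_neg_of_sum_sq_neg d T' fun x hx hx0 => h x ▸ hSneg x hx hx0
  · exact hS' ▸ finrank_le_card_neg_of_sum_sq_neg c T fun x hx hx0 => (h x).symm ▸ hS'neg x hx hx0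

end Inertia

namespace Matrix

variable {n : Type*} [Fintype n] [DecidableEq n]

theorem dotProduct_mul_diagonal_mul_transpose_mulVec (U : Matrix n n ℝ) (c x : n → ℝ) :
    x ⬝ᵥ (U * diagonal c * Uᵀ) *ᵥ x = ∑ i, c i * (Uᵀ *ᵥ x) i ^ 2 := by
  rw [← mulVec_mulVec, ← mulVec_mulVec, dotProduct_mulVec, ← mulVec_transpose]
  simp only [dotProduct, mulVec_diagonal, sq, mul_left_comm]

theorem IsHermitian.dotProduct_sub_smul_mulVec_eq_sum_eigenvalues {h : Matrix n n ℝ}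
    (hh : h.IsHermitian) (lam : ℝ) (x : n → ℝ) :
    x ⬝ᵥ (h - lam • 1) *ᵥ x =
      ∑ i, (hh.eigenvalues i - lam) * ((hh.eigenvectorUnitary : Matrix n n ℝ)ᵀ *ᵥ x) i ^ 2 := by
  set U : Matrix n n ℝ := ↑hh.eigenvectorUnitary
  have hU : U * Uᵀ = 1 := by
    simpa [star_eq_conjTranspose] using Unitary.coe_mul_star_self hh.eigenvectorUnitary
  have hdiag : h - lam • 1 = U * diagonal (fun i => hh.eigenvalues i - lam) * Uᵀ := by
    conv_lhs => rw [hh.spectral_theorem]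
    rw [← diagonal_sub, Matrix.mul_sub, Matrix.sub_mul, ← hU]
    simp [Unitary.conjStarAlgAut_apply, U, star_eq_conjTranspose, ← smul_one_eq_diagonal]
  rw [hdiag, dotProduct_mul_diagonal_mul_transpose_mulVec]

theorem IsHermitian.surjective_mulVecLin_transpose_eigenvectorUnitary {h : Matrix n n ℝ}
    (hh : h.IsHermitian) :
    Function.Surjective (hh.eigenvectorUnitary : Matrix n n ℝ)ᵀ.mulVecLin := by
  have hU : (hh.eigenvectorUnitary : Matrix n n ℝ)ᵀ * hh.eigenvectorUnitary = 1 := by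
    simpa [star_eq_conjTranspose] using Unitary.coe_star_mul_self hh.eigenvectorUnitary
  exact fun z =>
    ⟨hh.eigenvectorUnitary *ᵥ z, by rw [mulVecLin_apply, mulVec_mulVec, hU, one_mulVec]⟩

theorem IsSymm.two_mul_dotProduct_sub_smul_mulVec {h : Matrix n n ℝ} (hh : h.IsSymm)
    {ψ : n → ℝ} {lam : ℝ} (heig : h *ᵥ ψ = lam • ψ) (y : n → ℝ) :
    2 * ((ψ * y) ⬝ᵥ (h - lam • 1) *ᵥ (ψ * y)) =
      -∑ r, ∑ s, ψ r * h r s * ψ s * (y r - y s) ^ 2 := by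
  have hrow : ∑ r, ∑ s, ψ r * h r s * ψ s * y r ^ 2 = lam * ∑ r, (ψ r * y r) ^ 2 := by
    rw [mul_sum]
    refine sum_congr rfl fun r _ => ?_
    have hr := congrFun heig r
    simp only [mulVec, dotProduct, Pi.smul_apply, smul_eq_mul] at hr
    calc ∑ s, ψ r * h r s * ψ s * y r ^ 2 = ψ r * y r ^ 2 * ∑ s, h r s * ψ s := by
          rw [mul_sum]; exact sum_congr rfl fun s _ => by ring
      _ = lam * (ψ r * y r) ^ 2 := by rw [hr]; ring
  have hcol : ∑ r, ∑ s, ψ r * h r s * ψ s * y s ^ 2 = lam * ∑ r, (ψ r * y r) ^ 2 := by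
    rw [sum_comm, ← hrow]
    refine sum_congr rfl fun r _ => sum_congr rfl fun s _ => ?_
    rw [hh.apply r s]; ring
  have hexp : ∀ r s, ψ r * h r s * ψ s * (y r - y s) ^ 2 = ψ r * h r s * ψ s * y r ^ 2 +
      ψ r * h r s * ψ s * y s ^ 2 - 2 * ((ψ r * y r) * (h r s * (ψ s * y s))) := fun r s => by ring
  have hquad : (ψ * y) ⬝ᵥ h *ᵥ (ψ * y) = ∑ r, ∑ s, (ψ r * y r) * (h r s * (ψ s * y s)) := by
    simp only [dotProduct, mulVec, Pi.mul_apply, mul_sum]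
  have hnorm : (ψ * y) ⬝ᵥ (ψ * y) = ∑ r, (ψ r * y r) ^ 2 := by
    simp only [dotProduct, Pi.mul_apply, sq]
  rw [sub_mulVec, smul_mulVec, one_mulVec, dotProduct_sub, dotProduct_smul, hquad, hnorm,
    smul_eq_mul]
  simp only [hexp, sum_add_distrib, sum_sub_distrib, hrow, hcol, ← mul_sum]
  ring

end Matrix

namespace SimpleGraph

variable {V : Type*} (G : SimpleGraph V)

/-- Each edge is oriented by the representative that `Quot.out` picks; only squares of the
entries matter below. -/
noncomputable def coboundary : (V → ℝ) →ₗ[ℝ] G.edgeSet → ℝ where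
  toFun y e := y e.1.out.1 - y e.1.out.2
  map_add' x y := by ext; simp only [Pi.add_apply]; ring
  map_smul' a y := by ext; simp only [Pi.smul_apply, smul_eq_mul, RingHom.id_apply]; ring

variable {G}

theorem coboundary_apply (y : V → ℝ) (e : G.edgeSet) :
    G.coboundary y e = y e.1.out.1 - y e.1.out.2 := rfl

theorem Preconnected.ker_coboundary_le (hG : G.Preconnected) :
    LinearMap.ker G.coboundary ≤ Submodule.span ℝ {1} := by
  intro y hy
  have hadj : ∀ u v, G.Adj u v → y u = y v := by
    intro u v huv
    have hout : s((s(u, v)).out.1, (s(u, v)).out.2) = s(u, v) := Quot.out_eq _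
    have hdiff : y (s(u, v)).out.1 = y (s(u, v)).out.2 :=
      sub_eq_zero.1 (congrFun hy ⟨s(u, v), huv⟩)
    rcases Sym2.eq_iff.1 hout with ⟨h1, h2⟩ | ⟨h1, h2⟩
    · rwa [h1, h2] at hdiff
    · rw [h1, h2] at hdiff; exact hdiff.symm
  obtain _ | ⟨⟨v₀⟩⟩ := isEmpty_or_nonempty V
  · simp [Subsingleton.elim y 0]
  have hconst : ∀ v, y v = y v₀ := fun v => (hG v v₀).elim fun p => by
    induction p with
    | nil => rfl
    | cons h _ ih => exact (hadj _ _ h).trans ih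
  exact Submodule.mem_span_singleton.2 ⟨y v₀, funext fun v => by simp [hconst v]⟩

theorem IsTree.surjective_coboundary [Fintype V] (hG : G.IsTree) :
    Function.Surjective G.coboundary := by
  classical
  rw [← LinearMap.range_eq_top]
  apply Submodule.eq_top_of_finrank_eq
  have hker : finrank ℝ (LinearMap.ker G.coboundary) ≤ 1 :=
    (Submodule.finrank_mono hG.connected.preconnected.ker_coboundary_le).trans
      ((finrank_span_le_card _).trans (by simp))
  have hrank := G.coboundary.finrank_range_add_finrank_ker
  have hle := Submodule.finrank_le (LinearMap.range G.coboundary)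
  have hcard := hG.card_edgeFinset
  rw [finrank_fintype_fun_eq_card] at hrank hle ⊢
  rw [edgeFinset_card] at hcard
  omega

variable [Fintype V] [DecidableRel G.Adj] {M : Type*} [AddCommMonoid M]

theorem sum_sum_eq_sum_dart {f : V → V → M} (hf : ∀ r s, ¬G.Adj r s → f r s = 0) :
    ∑ r, ∑ s, f r s = ∑ d : G.Dart, f d.fst d.snd := by
  rw [← Fintype.sum_prod_type', ← sum_filter_of_ne (p := fun p : V × V => G.Adj p.1 p.2)
    fun p _ hp => not_not.1 (mt (hf p.1 p.2) hp)]
  exact sum_bij' (fun p hp => ⟨p, (mem_filter.1 hp).2⟩) (fun d _ => d.toProd)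
    (by simp) (by simp) (by simp) (by simp) (by simp)

theorem sum_dart_eq_two_nsmul_sum_edgeSet [DecidableEq V] {f : V → V → M}
    (hf : ∀ r s, f r s = f s r) :
    ∑ d : G.Dart, f d.fst d.snd = 2 • ∑ e : G.edgeSet, f e.1.out.1 e.1.out.2 := by
  rw [← sum_fiberwise_of_maps_to (g := Dart.edge) (t := G.edgeFinset)
    fun d _ => mem_edgeFinset.2 d.edge_mem, ← sum_coe_sort G.edgeFinset, smul_sum]
  refine Fintype.sum_equiv (Equiv.subtypeEquivRight fun _ => mem_edgeFinset) _ _ fun e => ?_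
  have hd : s(e.1.out.1, e.1.out.2) = e := Quot.out_eq _
  let d : G.Dart := ⟨e.1.out, by rw [← mem_edgeSet, hd, ← mem_edgeFinset]; exact e.2⟩
  rw [← hd]
  change ∑ d' ∈ ({d' : G.Dart | d'.edge = d.edge} : Finset _), f d'.fst d'.snd = 2 • f d.fst d.snd
  rw [d.edge_fiber, sum_pair d.symm_ne.symm, two_nsmul]
  exact congrArg _ (hf _ _)

theorem sum_sum_eq_two_nsmul_sum_edgeSet [DecidableEq V] {f : V → V → M}
    (hf : ∀ r s, f r s = f s r) (hG : ∀ r s, ¬G.Adj r s → f r s = 0) :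
    ∑ r, ∑ s, f r s = 2 • ∑ e : G.edgeSet, f e.1.out.1 e.1.out.2 := by
  rw [G.sum_sum_eq_sum_dart hG, G.sum_dart_eq_two_nsmul_sum_edgeSet hf]

theorem ncard_adj_and_eq_two_mul_card [DecidableEq V] {P : V → V → Prop} [DecidableRel P]
    (hP : ∀ r s, P r s → P s r) :
    {p : V × V | G.Adj p.1 p.2 ∧ P p.1 p.2}.ncard =
      2 * #{e : G.edgeSet | P e.1.out.1 e.1.out.2} := by
  rw [Set.ncard_eq_toFinset_card', Set.toFinset_ofPred, card_filter, Fintype.sum_prod_type,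
    G.sum_sum_eq_sum_dart (fun r s h => if_neg fun hrs => h hrs.1)]
  simp only [Dart.adj, true_and]
  rw [G.sum_dart_eq_two_nsmul_sum_edgeSet (f := fun r s => if P r s then 1 else 0)
    fun r s => if_congr ⟨hP r s, hP s r⟩ rfl rfl, card_filter, smul_eq_mul]

end SimpleGraph

theorem Matrix.IsSymm.dotProduct_sub_smul_mulVec_eq_sum_edgeSet {V : Type*} [Fintype V]
    [DecidableEq V] {G : SimpleGraph V} [DecidableRel G.Adj] {h : Matrix V V ℝ} (hh : h.IsSymm)
    (hG : ∀ r s, r ≠ s → ¬G.Adj r s → h r s = 0) {ψ : V → ℝ} {lam : ℝ}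
    (heig : h *ᵥ ψ = lam • ψ) (hψ : ∀ v, ψ v ≠ 0) (x : V → ℝ) :
    x ⬝ᵥ (h - lam • 1) *ᵥ x =
      ∑ e : G.edgeSet, -(ψ e.1.out.1 * h e.1.out.1 e.1.out.2 * ψ e.1.out.2) *
        G.coboundary (ψ⁻¹ * x) e ^ 2 := by
  have hsum := G.sum_sum_eq_two_nsmul_sum_edgeSet
    (f := fun r s => ψ r * h r s * ψ s * ((ψ⁻¹ * x) r - (ψ⁻¹ * x) s) ^ 2)
    (fun r s => by simp only [hh.apply r s]; ring)
    (fun r s hrs => by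
      obtain rfl | hne := eq_or_ne r s
      · simp
      · simp [hG r s hne hrs])
  have h2 := hh.two_mul_dotProduct_sub_smul_mulVec heig (ψ⁻¹ * x)
  rw [hsum, nsmul_eq_mul, Nat.cast_ofNat, show ψ * (ψ⁻¹ * x) = x from
    funext fun v => mul_inv_cancel_left₀ (hψ v) (x v)] at h2
  simp only [SimpleGraph.coboundary_apply, neg_mul, sum_neg_distrib]
  linarith

theorem fiedler_tree_nodal_count_general {V : Type*} [Fintype V] [DecidableEq V]
    (G : SimpleGraph V) (hconn : G.Connected) (hacyclic : G.IsAcyclic)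
    (h : Matrix V V ℝ) (hherm : h.IsHermitian)
    (hsupp : ∀ r s, r ≠ s → (h r s ≠ 0 ↔ G.Adj r s))
    (hnonvanish : ∀ (μ : ℝ) (φ : V → ℝ), φ ≠ 0 → h.mulVec φ = μ • φ → ∀ v, φ v ≠ 0)
    (lam : ℝ) (ψ : V → ℝ) (hψ : ψ ≠ 0) (heig : h.mulVec ψ = lam • ψ) :
    {p : V × V | G.Adj p.1 p.2 ∧ 0 < ψ p.1 * h p.1 p.2 * ψ p.2}.ncard
      = 2 * {i | hherm.eigenvalues i < lam}.ncard := by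
  classical
  have hsymm : h.IsSymm := (conjTranspose_eq_transpose_of_trivial h).symm.trans hherm
  have hψ0 : ∀ v, ψ v ≠ 0 := hnonvanish lam ψ hψ heig
  have hT : Function.Surjective (G.coboundary ∘ₗ LinearMap.mulLeft ℝ ψ⁻¹) :=
    (SimpleGraph.IsTree.surjective_coboundary ⟨hconn, hacyclic⟩).comp fun y =>
      ⟨ψ * y, funext fun v => inv_mul_cancel_left₀ (hψ0 v) (y v)⟩
  have hinertia := card_neg_eq_of_sum_sq_eq
    (fun e : G.edgeSet => -(ψ e.1.out.1 * h e.1.out.1 e.1.out.2 * ψ e.1.out.2))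
    (fun i => hherm.eigenvalues i - lam) hT hherm.surjective_mulVecLin_transpose_eigenvectorUnitary
    fun x => (hsymm.dotProduct_sub_smul_mulVec_eq_sum_edgeSet
      (fun r s hrs hadj => not_not.1 (mt (hsupp r s hrs).1 hadj)) heig hψ0 x).symm.trans
        (hherm.dotProduct_sub_smul_mulVec_eq_sum_eigenvalues lam x)
  rw [G.ncard_adj_and_eq_two_mul_card (P := fun r s => 0 < ψ r * h r s * ψ s)
    fun r s hrs => by rw [hsymm.apply]; linarith [mul_right_comm (ψ r) (h r s) (ψ s)]]
  simpa [sub_neg, Set.ncard_eq_toFinset_card'] using hinertia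

/-- Fiedler's theorem on nodal counts of trees: for a real symmetric matrix strictly supported
on a finite tree, with simple eigenvalues and nowhere-vanishing eigenvectors, the number of
edges `(rs)` with `ψ_r h_{rs} ψ_s > 0` for the eigenvector `ψ` of the eigenvalue `λ` equals
`k - 1`, where `k - 1` is the number of eigenvalues below `λ`.  (Both sides are stated as
counts of ordered pairs, i.e. doubled.) -/
theorem fiedler_tree_nodal_count {V : Type*} [Fintype V] [DecidableEq V]
    (G : SimpleGraph V) (hconn : G.Connected) (hacyclic : G.IsAcyclic)
    (h : Matrix V V ℝ) (hherm : h.IsHermitian)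
    (hsupp : ∀ r s, r ≠ s → (h r s ≠ 0 ↔ G.Adj r s))
    (hsimple : Function.Injective hherm.eigenvalues)
    (hnonvanish : ∀ (μ : ℝ) (φ : V → ℝ), φ ≠ 0 → h.mulVec φ = μ • φ → ∀ v, φ v ≠ 0)
    (lam : ℝ) (ψ : V → ℝ) (hψ : ψ ≠ 0) (heig : h.mulVec ψ = lam • ψ) :
    {p : V × V | G.Adj p.1 p.2 ∧ 0 < ψ p.1 * h p.1 p.2 * ψ p.2}.ncard
      = 2 * {i | hherm.eigenvalues i < lam}.ncard :=
  fiedler_tree_nodal_count_general G hconn hacyclic h hherm hsupp hnonvanish lam ψ hψ heig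
end
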